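/- Let ℒ be a λ-theory and let Mℒ be the monoid with underlying set ℒ(1), multiplication t · s = t⟨s⟩ and unit pr_1, regarded as a one-object category. Then the Karoubi envelope (Cauchy completion, category of idempotents) of this one-object category is cartesian closed. -/

import Mathlib

open CategoryTheory Limits

/-- An algebraic theory (abstract clone / cartesian operad): sets of `n`-ary
operations with projections (variables) and substitution. Renaming along
`f : Fin n → Fin m` is derived as substitution along projections. -/
structure AlgTheory where
  carrier : ℕ → Type
  pr : ∀ {n : ℕ}, Fin n → carrier n
  subst : ∀ {n m : ℕ}, carrier n → (Fin n → carrier m) → carrier m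
  pr_subst : ∀ {n m : ℕ} (i : Fin n) (s : Fin n → carrier m), subst (pr i) s = s i
  subst_pr : ∀ {n : ℕ} (t : carrier n), subst t pr = t
  subst_assoc : ∀ {n m k : ℕ} (t : carrier n) (s : Fin n → carrier m) (r : Fin m → carrier k),
    subst (subst t s) r = subst t fun i => subst (s i) r

/-- Renaming (the functorial action on `Fin n`), derived from substitution. -/
def AlgTheory.rename (T : AlgTheory) {n m : ℕ} (f : Fin n → Fin m) (t : T.carrier n) :
    T.carrier m :=
  T.subst t fun i => T.pr (f i)
/-- Given a substitution tuple `s : T(m)^n`, the tuple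
`s⁺ : T(m+1)^(n+1)` consisting of the components of `s` weakened along
`Fin m ↪ Fin (m+1)` followed by the last projection. -/
def AlgTheory.lift (T : AlgTheory) {n m : ℕ} (s : Fin n → T.carrier m) :
    Fin (n + 1) → T.carrier (m + 1) :=
  Fin.lastCases (T.pr (Fin.last m)) fun i => T.rename Fin.castSucc (s i)

/-- A λ-theory: an algebraic theory with semi-closed structure, i.e. natural
retractions of `ℒ(n)` onto `ℒ(n+1)` (retraction `ρ`, section `λ` = `abs`),
compatible with substitution. -/
structure LambdaTheory extends AlgTheory where
  rho : ∀ {n : ℕ}, carrier n → carrier (n + 1)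
  abs : ∀ {n : ℕ}, carrier (n + 1) → carrier n
  rho_abs : ∀ {n : ℕ} (u : carrier (n + 1)), rho (abs u) = u
  rho_subst : ∀ {n m : ℕ} (t : carrier n) (s : Fin n → carrier m),
    subst (rho t) (AlgTheory.lift toAlgTheory s) = rho (subst t s)
  abs_subst : ∀ {n m : ℕ} (u : carrier (n + 1)) (s : Fin n → carrier m),
    subst (abs u) s = abs (subst u (AlgTheory.lift toAlgTheory s))

/-- The binary application operation `app = ρ(pr₁) ∈ ℒ(2)`. -/
def LambdaTheory.appOp (L : LambdaTheory) : L.carrier 2 := L.rho (L.pr 0)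

/-- The constant `𝕒 = λ(λ(app)) ∈ ℒ(0)`. -/
def LambdaTheory.appConst (L : LambdaTheory) : L.carrier 0 := L.abs (L.abs L.appOp)

/-- The monoid `Mℒ = ℒ(1)` with substitution as multiplication and the
projection (variable) as unit. -/
instance monoidM (L : LambdaTheory) : Monoid (L.carrier 1) where
  mul t s := L.subst t fun _ => s
  one := L.pr 0
  mul_assoc a b c := by
    show L.subst (L.subst a fun _ => b) (fun _ => c) =
      L.subst a fun _ => L.subst b fun _ => c
    rw [L.subst_assoc]
  one_mul a := L.pr_subst 0 fun _ => a
  mul_one a := by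
    show L.subst a (fun _ => L.pr 0) = a
    have : (fun _ : Fin 1 => L.pr (0 : Fin 1)) = L.pr := by
      funext i
      rw [Subsingleton.elim i 0]
    rw [this, L.subst_pr]

/-!
In `Mℒ = ℒ(1)` β-conversion provides Church pairs `⟨a, b⟩ = λz. z a b` with projections
`fst = λv. v K`, `snd = λv. v K'`, and abstraction provides currying `cur h = λb. h ⟨b, y⟩` with an
evaluation `ev` obeying the β-law `ev ∘ ⟨a, cur h ∘ b⟩ = h ∘ ⟨a, b⟩`. Surjective pairing and η
fail, so the one-object category only has weak products and exponentials. Splitting idempotents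
repairs this: the product of `(X, x)` and `(Y, y)` is the idempotent `x × y = ⟨x ∘ fst, y ∘ snd⟩`,
the exponential of `x` and `z` is the idempotent `u ↦ z ∘ u ∘ x`, and the equation `p ∘ m = m`
satisfied by every map `m` into a split idempotent `p` is what makes pairing and currying unique.
The left zero `cur fst` is terminal.
-/

open Idempotents MonoidalCategory

universe u

namespace CategoryTheory.Idempotents.Karoubi

variable {M : Type u} [Monoid M] {P Q : Karoubi (SingleObj M)}

lemma p_mul_p (P : Karoubi (SingleObj M)) : P.p * P.p = P.p := P.idem

lemma p_mul_f (f : P ⟶ Q) : Q.p * f.f = f.f := comp_p f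

lemma f_mul_p (f : P ⟶ Q) : f.f * P.p = f.f := p_comp f

lemma p_mul_f_mul_p (f : P ⟶ Q) : Q.p * f.f * P.p = f.f := f.comm

lemma comp_f_eq_mul {R : Karoubi (SingleObj M)} (f : P ⟶ Q) (g : Q ⟶ R) :
    (f ≫ g).f = g.f * f.f :=
  rfl

def ofIdem (e : M) (he : e * e = e) : Karoubi (SingleObj M) := ⟨SingleObj.star M, e, he⟩

lemma ofIdem_p (e : M) (he : e * e = e) : (ofIdem e he).p = e := rfl

def homOf (v : M) (hv : Q.p * v * P.p = v) : P ⟶ Q := ⟨v, hv⟩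

lemma homOf_f (v : M) (hv : Q.p * v * P.p = v) : (homOf v hv).f = v := rfl

end CategoryTheory.Idempotents.Karoubi

/-- A C-monoid in the sense of Lambek–Scott without the laws of surjective pairing and η.
In `cur h` the first component of a pair is the argument and the second the parameter. -/
class WeakCMonoid (M : Type u) [Monoid M] where
  fst : M
  snd : M
  pair : M → M → M
  cur : M → M
  ev : M
  fst_mul_pair (a b : M) : fst * pair a b = a
  snd_mul_pair (a b : M) : snd * pair a b = b
  pair_mul (a b c : M) : pair a b * c = pair (a * c) (b * c)
  cur_mul (h k : M) : cur h * k = cur (h * pair fst (k * snd))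
  ev_mul_pair_cur (h a b : M) : ev * pair a (cur h * b) = h * pair a b

namespace WeakCMonoid

variable {M : Type u} [Monoid M] [WeakCMonoid M]

def prodMap (a b : M) : M := pair (a * fst) (b * snd)

lemma prodMap_mul (a b m : M) : prodMap a b * m = pair (a * fst * m) (b * snd * m) := by
  rw [prodMap, pair_mul, mul_assoc, mul_assoc]

lemma prodMap_mul_pair (a b c d : M) : prodMap a b * pair c d = pair (a * c) (b * d) := by
  rw [prodMap_mul, mul_assoc, mul_assoc, fst_mul_pair, snd_mul_pair]

lemma prodMap_mul_prodMap (a b c d : M) :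
    prodMap a b * prodMap c d = prodMap (a * c) (b * d) := by
  rw [prodMap.eq_1 c d, prodMap_mul_pair, ← mul_assoc, ← mul_assoc, prodMap]

lemma fst_mul_prodMap (a b : M) : fst * prodMap a b = a * fst :=
  fst_mul_pair _ _

lemma snd_mul_prodMap (a b : M) : snd * prodMap a b = b * snd :=
  snd_mul_pair _ _

lemma cur_mul_eq_cur_prodMap (h k : M) : cur h * k = cur (h * prodMap 1 k) := by
  rw [cur_mul, prodMap, one_mul]

lemma ev_mul_prodMap_cur (h a b : M) : ev * prodMap a (cur h * b) = h * prodMap a b := by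
  rw [prodMap, mul_assoc, ev_mul_pair_cur, prodMap]

lemma cur_fst_mul (k : M) : cur fst * k = cur (fst : M) := by
  rw [cur_mul, fst_mul_pair]

def expMap (x z : M) : M := cur (z * ev * prodMap x 1)

lemma expMap_mul (x z k : M) : expMap x z * k = cur (z * ev * prodMap x k) := by
  rw [expMap, cur_mul_eq_cur_prodMap, mul_assoc, prodMap_mul_prodMap, mul_one, one_mul]

lemma expMap_mul_cur (x z h : M) : expMap x z * cur h = cur (z * h * prodMap x 1) := by
  rw [expMap_mul, ← mul_one (cur h), mul_assoc z, ev_mul_prodMap_cur, mul_assoc]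

lemma expMap_mul_expMap (x z x' z' : M) :
    expMap x z * expMap x' z' = expMap (x' * x) (z * z') := by
  rw [expMap.eq_1 x', expMap_mul_cur, mul_assoc, mul_assoc, prodMap_mul_prodMap, mul_one, expMap,
    ← mul_assoc, ← mul_assoc]

open Karoubi

def terminalCone : LimitCone (Functor.empty.{0} (Karoubi (SingleObj M))) where
  cone := asEmptyCone (ofIdem (cur fst) (cur_fst_mul _))
  isLimit := IsTerminal.ofUniqueHom
    (fun _ => homOf (cur fst) (by rw [ofIdem_p, cur_fst_mul, cur_fst_mul]))
    fun _ m => Karoubi.hom_ext _ _ ((p_mul_f m).symm.trans (cur_fst_mul _))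

def prodObj (X Y : Karoubi (SingleObj M)) : Karoubi (SingleObj M) :=
  ofIdem (prodMap X.p Y.p) (by rw [prodMap_mul_prodMap, p_mul_p, p_mul_p])

lemma prodObj_p (X Y : Karoubi (SingleObj M)) : (prodObj X Y).p = prodMap X.p Y.p := rfl

def prodFst (X Y : Karoubi (SingleObj M)) : prodObj X Y ⟶ X :=
  homOf (X.p * fst) (by
    rw [← mul_assoc, p_mul_p, mul_assoc, prodObj_p, fst_mul_prodMap, ← mul_assoc, p_mul_p])

def prodSnd (X Y : Karoubi (SingleObj M)) : prodObj X Y ⟶ Y :=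
  homOf (Y.p * snd) (by
    rw [← mul_assoc, p_mul_p, mul_assoc, prodObj_p, snd_mul_prodMap, ← mul_assoc, p_mul_p])

def prodLift {T X Y : Karoubi (SingleObj M)} (f : T ⟶ X) (g : T ⟶ Y) : T ⟶ prodObj X Y :=
  homOf (pair f.f g.f) (by
    rw [prodObj_p, prodMap_mul_pair, p_mul_f, p_mul_f, pair_mul, f_mul_p, f_mul_p])

lemma prodFst_f (X Y : Karoubi (SingleObj M)) : (prodFst X Y).f = X.p * fst := rfl

lemma prodSnd_f (X Y : Karoubi (SingleObj M)) : (prodSnd X Y).f = Y.p * snd := rfl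

lemma prodLift_f {T X Y : Karoubi (SingleObj M)} (f : T ⟶ X) (g : T ⟶ Y) :
    (prodLift f g).f = pair f.f g.f :=
  rfl

lemma prodLift_fst {T X Y : Karoubi (SingleObj M)} (f : T ⟶ X) (g : T ⟶ Y) :
    prodLift f g ≫ prodFst X Y = f :=
  Karoubi.hom_ext _ _ (by
    rw [comp_f_eq_mul, prodFst_f, prodLift_f, mul_assoc, fst_mul_pair, p_mul_f])

lemma prodLift_snd {T X Y : Karoubi (SingleObj M)} (f : T ⟶ X) (g : T ⟶ Y) :
    prodLift f g ≫ prodSnd X Y = g :=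
  Karoubi.hom_ext _ _ (by
    rw [comp_f_eq_mul, prodSnd_f, prodLift_f, mul_assoc, snd_mul_pair, p_mul_f])

lemma eq_prodLift {T X Y : Karoubi (SingleObj M)} {f : T ⟶ X} {g : T ⟶ Y}
    (m : T ⟶ prodObj X Y) (h₁ : m ≫ prodFst X Y = f) (h₂ : m ≫ prodSnd X Y = g) :
    m = prodLift f g :=
  Karoubi.hom_ext _ _ (by
    rw [← p_mul_f m, prodObj_p, prodMap_mul, prodLift_f, ← h₁, ← h₂]
    rfl)

def prodCone (X Y : Karoubi (SingleObj M)) : LimitCone (Limits.pair X Y) where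
  cone := BinaryFan.mk (prodFst X Y) (prodSnd X Y)
  isLimit := BinaryFan.IsLimit.mk _ prodLift prodLift_fst prodLift_snd
    fun _ _ m h₁ h₂ => eq_prodLift m h₁ h₂

instance : CartesianMonoidalCategory (Karoubi (SingleObj M)) :=
  .ofChosenFiniteProducts terminalCone prodCone

lemma tensorObj_p (X Y : Karoubi (SingleObj M)) : (X ⊗ Y).p = prodMap X.p Y.p := rfl

lemma whiskerLeft_f (X : Karoubi (SingleObj M)) {Y Y' : Karoubi (SingleObj M)} (f : Y ⟶ Y') :
    (X ◁ f).f = prodMap X.p f.f := by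
  have h₁ : X.p * fst * (X ◁ f).f = X.p * fst :=
    congrArg Karoubi.Hom.f (CartesianMonoidalCategory.whiskerLeft_fst X f)
  have h₂ : Y'.p * snd * (X ◁ f).f = f.f * (Y.p * snd) :=
    congrArg Karoubi.Hom.f (CartesianMonoidalCategory.whiskerLeft_snd X f)
  rw [← p_mul_f (X ◁ f), tensorObj_p, prodMap_mul, h₁, h₂, ← mul_assoc, f_mul_p, prodMap]

def expObj (X Z : Karoubi (SingleObj M)) : Karoubi (SingleObj M) :=
  ofIdem (expMap X.p Z.p) (by rw [expMap_mul_expMap, p_mul_p, p_mul_p])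

lemma expObj_p (X Z : Karoubi (SingleObj M)) : (expObj X Z).p = expMap X.p Z.p := rfl

lemma cur_f_mul_p {X Y Z : Karoubi (SingleObj M)} (v : X ⊗ Y ⟶ Z) :
    cur v.f * Y.p = cur v.f := by
  rw [cur_mul_eq_cur_prodMap]
  congr 1
  conv_lhs => rw [← f_mul_p v]
  rw [tensorObj_p, mul_assoc, prodMap_mul_prodMap, mul_one, p_mul_p, ← tensorObj_p, f_mul_p]

def curryEquiv (X Y Z : Karoubi (SingleObj M)) : (X ⊗ Y ⟶ Z) ≃ (Y ⟶ expObj X Z) where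
  toFun v := homOf (cur v.f) (by
    rw [expObj_p, expMap_mul_cur, cur_mul_eq_cur_prodMap, mul_assoc, prodMap_mul_prodMap,
      mul_one, one_mul]
    exact congrArg cur (p_mul_f_mul_p v))
  invFun u := homOf (Z.p * ev * prodMap X.p u.f) (by
    rw [tensorObj_p, mul_assoc, mul_assoc (Z.p * ev), prodMap_mul_prodMap, p_mul_p, f_mul_p,
      ← mul_assoc, ← mul_assoc, p_mul_p])
  left_inv v := Karoubi.hom_ext _ _ (by
    rw [homOf_f, homOf_f, ← cur_f_mul_p v, mul_assoc, ev_mul_prodMap_cur, ← mul_assoc,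
      ← tensorObj_p, p_mul_f_mul_p])
  right_inv u := Karoubi.hom_ext _ _ (by
    rw [homOf_f, homOf_f, ← expMap_mul, ← expObj_p, p_mul_f])

lemma curryEquiv_naturality (X : Karoubi (SingleObj M)) {Y' Y Z : Karoubi (SingleObj M)}
    (f : Y' ⟶ Y) (g : X ⊗ Y ⟶ Z) :
    curryEquiv X Y' Z (X ◁ f ≫ g) = f ≫ curryEquiv X Y Z g := by
  refine Karoubi.hom_ext _ _ ((congrArg cur ?_).trans (cur_mul_eq_cur_prodMap _ _).symm)
  calc (X ◁ f ≫ g).f = g.f * prodMap X.p Y.p * prodMap 1 f.f := by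
        rw [comp_f_eq_mul, whiskerLeft_f, mul_assoc, prodMap_mul_prodMap, mul_one, p_mul_f]
    _ = g.f * prodMap 1 f.f := by rw [← tensorObj_p, f_mul_p]

instance : MonoidalClosed (Karoubi (SingleObj M)) where
  closed X :=
    { rightAdj := Adjunction.rightAdjointOfEquiv (curryEquiv X)
        fun _ _ _ => curryEquiv_naturality X
      adj := Adjunction.adjunctionOfEquivRight _ _ }

end WeakCMonoid

namespace AlgTheory

variable (T : AlgTheory) {n m k : ℕ}

lemma subst_rename (f : Fin n → Fin m) (t : T.carrier n) (r : Fin m → T.carrier k) :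
    T.subst (T.rename f t) r = T.subst t (r ∘ f) := by
  rw [rename, subst_assoc]
  simp only [pr_subst]
  rfl

lemma rename_subst (f : Fin m → Fin k) (t : T.carrier n) (r : Fin n → T.carrier m) :
    T.rename f (T.subst t r) = T.subst t fun i => T.rename f (r i) :=
  T.subst_assoc _ _ _

lemma rename_pr (f : Fin n → Fin m) (i : Fin n) : T.rename f (T.pr i) = T.pr (f i) :=
  T.pr_subst _ _

lemma subst_rename_castSucc_snoc (t : T.carrier n) (r : Fin n → T.carrier m) (a : T.carrier m) :
    T.subst (T.rename Fin.castSucc t) (Fin.snoc r a) = T.subst t r := by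
  rw [subst_rename]
  congr 1
  funext i
  exact Fin.snoc_castSucc ..

lemma lift_last (s : Fin n → T.carrier m) : T.lift s (Fin.last n) = T.pr (Fin.last m) :=
  Fin.lastCases_last ..

lemma lift_castSucc (s : Fin n → T.carrier m) (i : Fin n) :
    T.lift s i.castSucc = T.rename Fin.castSucc (s i) :=
  Fin.lastCases_castSucc ..

lemma subst_rename_castSucc_lift (t : T.carrier n) (r : Fin n → T.carrier m) :
    T.subst (T.rename Fin.castSucc t) (T.lift r) = T.rename Fin.castSucc (T.subst t r) := by
  rw [subst_rename, rename_subst]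
  congr 1
  funext i
  exact T.lift_castSucc r i

end AlgTheory

namespace LambdaTheory

variable (L : LambdaTheory) {n m : ℕ}

def app (t s : L.carrier n) : L.carrier n := L.subst L.appOp ![t, s]

lemma subst_app (t s : L.carrier n) (r : Fin n → L.carrier m) :
    L.subst (L.app t s) r = L.app (L.subst t r) (L.subst s r) := by
  rw [app, L.subst_assoc, app]
  congr 1
  funext i
  fin_cases i <;> rfl

lemma app_eq_subst_rho (t s : L.carrier n) :
    L.app t s = L.subst (L.rho t) (Fin.snoc L.pr s) := by
  have h : (![t, s] : Fin 2 → L.carrier n) =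
      fun i => L.subst (L.lift (fun _ : Fin 1 => t) i) (Fin.snoc L.pr s) := by
    funext i
    fin_cases i
    · show t = L.subst (L.lift _ (Fin.castSucc 0)) _
      rw [L.lift_castSucc, L.subst_rename_castSucc_snoc, L.subst_pr]
    · show s = L.subst (L.lift _ (Fin.last 1)) _
      rw [L.lift_last, L.pr_subst, Fin.snoc_last]
  rw [app, h, ← L.subst_assoc, appOp, L.rho_subst, L.pr_subst]

lemma app_abs (u : L.carrier (n + 1)) (s : L.carrier n) :
    L.app (L.abs u) s = L.subst u (Fin.snoc L.pr s) := by
  rw [app_eq_subst_rho, L.rho_abs]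

-- `K = λx y. x` and `K' = λx y. y`; `abs` binds the last variable.
def K (n : ℕ) : L.carrier n := L.abs (L.abs (L.pr (Fin.last n).castSucc))

def K' (n : ℕ) : L.carrier n := L.abs (L.abs (L.pr (Fin.last (n + 1))))

lemma subst_K (r : Fin n → L.carrier m) : L.subst (L.K n) r = L.K m := by
  rw [K, L.abs_subst, L.abs_subst, L.pr_subst, L.lift_castSucc, L.lift_last, L.rename_pr, K]

lemma subst_K' (r : Fin n → L.carrier m) : L.subst (L.K' n) r = L.K' m := by
  rw [K', L.abs_subst, L.abs_subst, L.pr_subst, L.lift_last, K']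

lemma app_app_K (a b : L.carrier n) : L.app (L.app (L.K n) a) b = a := by
  rw [K, app_abs, L.abs_subst, L.pr_subst, L.lift_castSucc, Fin.snoc_last, app_abs,
    L.subst_rename_castSucc_snoc, L.subst_pr]

lemma app_app_K' (a b : L.carrier n) : L.app (L.app (L.K' n) a) b = b := by
  rw [K', app_abs, L.abs_subst, L.pr_subst, L.lift_last, app_abs, L.pr_subst, Fin.snoc_last]

def pair (t s : L.carrier n) : L.carrier n :=
  L.abs (L.app (L.app (L.pr (Fin.last n)) (L.rename Fin.castSucc t)) (L.rename Fin.castSucc s))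

lemma subst_pair (t s : L.carrier n) (r : Fin n → L.carrier m) :
    L.subst (L.pair t s) r = L.pair (L.subst t r) (L.subst s r) := by
  rw [pair, L.abs_subst, subst_app, subst_app, L.pr_subst, L.lift_last,
    L.subst_rename_castSucc_lift, L.subst_rename_castSucc_lift, pair]

lemma app_pair (t s c : L.carrier n) : L.app (L.pair t s) c = L.app (L.app c t) s := by
  rw [pair, app_abs, subst_app, subst_app, L.pr_subst, Fin.snoc_last,
    L.subst_rename_castSucc_snoc, L.subst_rename_castSucc_snoc, L.subst_pr, L.subst_pr]

lemma mul_def (a b : L.carrier 1) : a * b = L.subst a fun _ => b := rfl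

lemma rename_castSucc_eq_subst (k : L.carrier 1) :
    L.rename Fin.castSucc k = L.subst k fun _ => L.pr 0 := by
  rw [AlgTheory.rename]
  congr 1
  funext i
  rw [Subsingleton.elim i 0]
  rfl

def fstOp : L.carrier 1 := L.app (L.pr 0) (L.K 1)

def sndOp : L.carrier 1 := L.app (L.pr 0) (L.K' 1)

def evalOp : L.carrier 1 := L.app L.sndOp L.fstOp

-- `curryOp h = λb. h ⟨b, y⟩`, where `y = pr 0` is the variable of `ℒ(1)`.
def curryOp (h : L.carrier 1) : L.carrier 1 :=
  L.abs (L.subst h fun _ => L.pair (L.pr (Fin.last 1)) (L.pr 0))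

lemma subst_fstOp_pair (a b : L.carrier m) : L.subst L.fstOp (fun _ => L.pair a b) = a := by
  rw [fstOp, subst_app, L.pr_subst, subst_K, app_pair, app_app_K]

lemma subst_sndOp_pair (a b : L.carrier m) : L.subst L.sndOp (fun _ => L.pair a b) = b := by
  rw [sndOp, subst_app, L.pr_subst, subst_K', app_pair, app_app_K']

lemma fstOp_mul_pair (a b : L.carrier 1) : L.fstOp * L.pair a b = a := L.subst_fstOp_pair a b

lemma sndOp_mul_pair (a b : L.carrier 1) : L.sndOp * L.pair a b = b := L.subst_sndOp_pair a b

lemma pair_mul (a b c : L.carrier 1) : L.pair a b * c = L.pair (a * c) (b * c) :=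
  L.subst_pair a b _

lemma curryOp_mul_eq (h k : L.carrier 1) : L.curryOp h * k =
    L.abs (L.subst h fun _ => L.pair (L.pr (Fin.last 1)) (L.rename Fin.castSucc k)) := by
  rw [curryOp, mul_def, L.abs_subst, L.subst_assoc, subst_pair, L.pr_subst, L.pr_subst,
    L.lift_last, (L.lift_castSucc _ 0 : L.lift _ 0 = _)]

lemma curryOp_mul (h k : L.carrier 1) :
    L.curryOp h * k = L.curryOp (h * L.pair L.fstOp (k * L.sndOp)) := by
  rw [curryOp_mul_eq, curryOp, L.mul_def h, L.subst_assoc, subst_pair, subst_fstOp_pair,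
    L.mul_def k, L.subst_assoc, subst_sndOp_pair, rename_castSucc_eq_subst]

lemma app_curryOp (h a : L.carrier 1) : L.app (L.curryOp h) a = h * L.pair a 1 := by
  rw [curryOp, app_abs, L.subst_assoc, subst_pair, L.pr_subst, L.pr_subst, Fin.snoc_last]
  rfl

lemma evalOp_mul_pair_curryOp (h a b : L.carrier 1) :
    L.evalOp * L.pair a (L.curryOp h * b) = h * L.pair a b := by
  rw [evalOp, mul_def, subst_app, subst_fstOp_pair, subst_sndOp_pair, curryOp_mul, app_curryOp,
    mul_assoc, pair_mul, fstOp_mul_pair, mul_assoc, sndOp_mul_pair, mul_one]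

instance : WeakCMonoid (L.carrier 1) where
  fst := L.fstOp
  snd := L.sndOp
  pair := L.pair
  cur := L.curryOp
  ev := L.evalOp
  fst_mul_pair := L.fstOp_mul_pair
  snd_mul_pair := L.sndOp_mul_pair
  pair_mul := L.pair_mul
  cur_mul := L.curryOp_mul
  ev_mul_pair_cur := L.evalOp_mul_pair_curryOp

end LambdaTheory

/-- STATEMENT 13: the Karoubi envelope (Cauchy completion) of the one-object
category given by the monoid `ℒ(1)` of a λ-theory `ℒ` is cartesian closed. -/
theorem karoubi_cartesianClosed (L : LambdaTheory) :
    ∃ h : CartesianMonoidalCategory (Idempotents.Karoubi (SingleObj (L.carrier 1))),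
      Nonempty (@MonoidalClosed (Idempotents.Karoubi (SingleObj (L.carrier 1))) _
        h.toMonoidalCategory) :=
  ⟨inferInstance, ⟨inferInstance⟩⟩
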